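/- Let q₁ and q₂ be partitions of n with q₁ ⪯ q₂ in the dominance order, and let r ∈ (−1/2, 1/2]. For j ≥ 1 write c_j(q) for the j-th part of the transpose q^t (set to 0 for j beyond the length of q^t), and y_j(r) = r + (−1)^{j−1} σ ⌊j/2⌋ with σ = 1 if r ≥ 0 and σ = −1 if r < 0. Then Σ_{j≥1} c_j(q₁) y_j(r)² ≤ Σ_{j≥1} c_j(q₂) y_j(r)², i.e. ‖ξ_r(q₁)‖ ≤ ‖ξ_r(q₂)‖. Moreover, if r ∉ {0, 1/2}, equality holds if and only if q₁ = q₂. -/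

import Mathlib

/-- A partition of `N`: a non-increasing list of positive naturals summing to `N`. -/
def IsPartition (N : ℕ) (l : List ℕ) : Prop :=
  l.Pairwise (· ≥ ·) ∧ (∀ p ∈ l, 0 < p) ∧ l.sum = N

/-- The height `h_d(s) = #{j : d_j ≥ s}` (the `s`-th part of the transpose partition). -/
def height (l : List ℕ) (s : ℕ) : ℕ :=
  (l.filter (fun p => decide (s ≤ p))).length

/-- Dominance order on partitions: `Dom p q` means `p ⪯ q`. -/
def Dom (p q : List ℕ) : Prop :=
  ∀ j : ℕ, (p.take j).sum ≤ (q.take j).sum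

/-- `σ(r) = 1` if `r ≥ 0` and `σ(r) = −1` if `r < 0`. -/
noncomputable def sgnR (r : ℝ) : ℝ := if 0 ≤ r then 1 else -1

/-- `y_j(r) = r + (−1)^(j−1) · σ · ⌊j/2⌋`, where `σ = 1` if `r ≥ 0` and `σ = −1` if `r < 0`. -/
noncomputable def yval (r : ℝ) (j : ℕ) : ℝ :=
  r + (-1 : ℝ) ^ (j - 1) * sgnR r * ((j / 2 : ℕ) : ℝ)

/-!
Let `C_k(q) = c_1(q) + ⋯ + c_k(q) = ∑ᵢ min(qᵢ, k)`. Dominance `q₁ ⪯ q₂` gives `C_k(q₂) ≤ C_k(q₁)`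
for every `k`, and `C_n(q₁) = C_n(q₂) = n`. Since `|y_1|, |y_2|, |y_3|, … = |r|, 1 - |r|, 1 + |r|,
2 - |r|, …`, the weights `y_j²` are non-decreasing for `|r| ≤ 1/2`, and strictly increasing for
`0 < |r| < 1/2`. Abel summation `∑ⱼ cⱼ yⱼ² = C_n y_n² - ∑_{k<n} C_k (y_{k+1}² - y_k²)` then
gives the inequality, and with strictly increasing weights equality forces `C_k(q₁) = C_k(q₂)`
for all `k`, so the transposes, and hence the partitions, agree.
-/

open Finset

section Majorization

variable {R : Type*} [CommRing R] {c d w : ℕ → R} {n : ℕ}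

lemma sum_mul_sub_sum_mul_eq_of_sum_eq (htot : ∑ i ∈ range n, c i = ∑ i ∈ range n, d i) :
    ∑ i ∈ range n, d i * w i - ∑ i ∈ range n, c i * w i =
      ∑ i ∈ range (n - 1), (w (i + 1) - w i) * ∑ j ∈ range (i + 1), (c j - d j) := by
  have hparts := sum_range_by_parts w (fun i => d i - c i) n
  rw [sum_sub_distrib, htot, sub_self, smul_zero, zero_sub, ← sum_neg_distrib] at hparts
  calc ∑ i ∈ range n, d i * w i - ∑ i ∈ range n, c i * w i
      = ∑ i ∈ range n, w i • (d i - c i) := by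
        rw [← sum_sub_distrib]; exact sum_congr rfl fun i _ => by rw [smul_eq_mul]; ring
    _ = _ := by
        rw [hparts]
        refine sum_congr rfl fun i _ => ?_
        rw [smul_eq_mul, ← mul_neg, ← sum_neg_distrib]
        simp only [neg_sub]

variable [LinearOrder R] [IsStrictOrderedRing R]

lemma sum_mul_le_sum_mul_of_sum_range_le (hw : Monotone w)
    (hcd : ∀ k < n, ∑ i ∈ range k, d i ≤ ∑ i ∈ range k, c i)
    (htot : ∑ i ∈ range n, c i = ∑ i ∈ range n, d i) :
    ∑ i ∈ range n, c i * w i ≤ ∑ i ∈ range n, d i * w i := by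
  rw [← sub_nonneg, sum_mul_sub_sum_mul_eq_of_sum_eq htot]
  refine sum_nonneg fun i hi => mul_nonneg (sub_nonneg.2 (hw i.le_succ)) ?_
  rw [sum_sub_distrib, sub_nonneg]
  exact hcd _ (by rw [mem_range] at hi; omega)

lemma eq_of_sum_mul_eq_of_strictMono (hw : StrictMono w)
    (hcd : ∀ k < n, ∑ i ∈ range k, d i ≤ ∑ i ∈ range k, c i)
    (htot : ∑ i ∈ range n, c i = ∑ i ∈ range n, d i)
    (heq : ∑ i ∈ range n, c i * w i = ∑ i ∈ range n, d i * w i) :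
    ∀ i < n, c i = d i := by
  have hnonneg : ∀ i ∈ range (n - 1), 0 ≤ (w (i + 1) - w i) * ∑ j ∈ range (i + 1), (c j - d j) :=
    fun i hi => mul_nonneg (sub_nonneg.2 (hw.monotone i.le_succ))
      (by rw [sum_sub_distrib, sub_nonneg]; exact hcd _ (by rw [mem_range] at hi; omega))
  have hzero := sum_mul_sub_sum_mul_eq_of_sum_eq (w := w) htot
  rw [heq, sub_self, eq_comm, sum_eq_zero_iff_of_nonneg hnonneg] at hzero
  have hpartial : ∀ k ≤ n, ∑ i ∈ range k, (c i - d i) = 0 := by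
    intro k hk
    rcases k.eq_zero_or_pos with rfl | hk0
    · exact sum_range_zero _
    rcases hk.lt_or_eq with hkn | rfl
    · obtain ⟨i, rfl⟩ : ∃ i, k = i + 1 := ⟨k - 1, by omega⟩
      exact (mul_eq_zero.1 (hzero i (by rw [mem_range]; omega))).resolve_left
        (sub_ne_zero.2 (hw (Nat.lt_succ_self i)).ne')
    · rw [sum_sub_distrib, htot, sub_self]
  intro i hi
  have := sum_range_succ_sub_sum (fun j => c j - d j) (n := i)
  rw [hpartial _ hi, hpartial _ hi.le, sub_zero] at this
  exact sub_eq_zero.1 this.symm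

end Majorization

def truncatedSum (l : List ℕ) (k : ℕ) : ℕ := (l.map (min · k)).sum

lemma height_cons (p : ℕ) (l : List ℕ) (j : ℕ) :
    height (p :: l) j = (if j ≤ p then 1 else 0) + height l j := by
  by_cases h : j ≤ p <;> simp [height, h, Nat.add_comm]

lemma height_eq_zero_of_forall_lt {l : List ℕ} {j : ℕ} (h : ∀ p ∈ l, p < j) :
    height l j = 0 := by
  simpa only [height, List.length_eq_zero_iff, List.filter_eq_nil_iff, decide_eq_true_eq, not_le]

lemma height_eq_count_add_height_succ (l : List ℕ) (v : ℕ) :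
    height l v = l.count v + height l (v + 1) := by
  induction l with
  | nil => rfl
  | cons p l ih =>
    simp only [height_cons, List.count_cons, ih, beq_iff_eq]
    split_ifs <;> omega

lemma truncatedSum_succ (l : List ℕ) (k : ℕ) :
    truncatedSum l (k + 1) = truncatedSum l k + height l (k + 1) := by
  induction l with
  | nil => rfl
  | cons p l ih =>
    simp only [truncatedSum, List.map_cons, List.sum_cons] at ih ⊢
    rw [ih, height_cons]
    split <;> omega

lemma sum_range_height_succ (l : List ℕ) (k : ℕ) :
    ∑ i ∈ range k, height l (i + 1) = truncatedSum l k := by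
  induction k with
  | zero => simp [truncatedSum]
  | succ k ih => rw [sum_range_succ, ih, truncatedSum_succ]

lemma truncatedSum_add_sum_take_le (l : List ℕ) (h k : ℕ) :
    truncatedSum l k + (l.take h).sum ≤ h * k + l.sum := by
  induction l generalizing h with
  | nil => simp [truncatedSum]
  | cons p l ih =>
    cases h with
    | zero =>
      have := ih 0
      simp only [truncatedSum, List.map_cons, List.sum_cons, List.take_zero, List.sum_nil] at this ⊢
      omega
    | succ h =>
      have := ih h
      simp only [truncatedSum, List.map_cons, List.sum_cons, List.take_succ_cons,
        add_one_mul] at this ⊢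
      omega

lemma truncatedSum_add_sum_take_height {l : List ℕ} (hl : l.Pairwise (· ≥ ·)) (k : ℕ) :
    truncatedSum l k + (l.take (height l (k + 1))).sum = height l (k + 1) * k + l.sum := by
  induction l with
  | nil => simp [truncatedSum, height]
  | cons p l ih =>
    rw [List.pairwise_cons] at hl
    have ih := ih hl.2
    simp only [truncatedSum, List.map_cons, List.sum_cons, height_cons] at ih ⊢
    by_cases hp : k + 1 ≤ p
    · rw [if_pos hp, add_comm 1, List.take_succ_cons, List.sum_cons, min_eq_right (by omega),
        add_one_mul]
      omega
    · have hl0 : height l (k + 1) = 0 :=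
        height_eq_zero_of_forall_lt fun q hq => (hl.1 q hq).trans_lt (by omega)
      simp only [if_neg hp, hl0, List.take_zero, List.sum_nil, zero_mul, add_zero] at ih ⊢
      omega

-- Compare the two sides at `h = #{i : q₁ᵢ > k}`, where the bound for sorted `q₁` is attained.
lemma truncatedSum_le_of_dom {q₁ q₂ : List ℕ} (hq₁ : q₁.Pairwise (· ≥ ·)) (hsum : q₁.sum = q₂.sum)
    (hdom : Dom q₁ q₂) (k : ℕ) : truncatedSum q₂ k ≤ truncatedSum q₁ k := by
  have h₁ := truncatedSum_add_sum_take_height hq₁ k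
  have h₂ := truncatedSum_add_sum_take_le q₂ (height q₁ (k + 1)) k
  have := hdom (height q₁ (k + 1))
  omega

namespace IsPartition

variable {n : ℕ} {l q₁ q₂ : List ℕ}

lemma le_of_mem (hl : IsPartition n l) {p : ℕ} (hp : p ∈ l) : p ≤ n :=
  hl.2.2 ▸ List.le_sum_of_mem hp

lemma truncatedSum_self (hl : IsPartition n l) : truncatedSum l n = n := by
  rw [truncatedSum, List.map_congr_left fun p hp => min_eq_left (hl.le_of_mem hp), List.map_id',
    hl.2.2]

lemma eq_of_height_succ_eq (h₁ : IsPartition n q₁) (h₂ : IsPartition n q₂)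
    (hh : ∀ i < n, height q₁ (i + 1) = height q₂ (i + 1)) : q₁ = q₂ := by
  have hheight : ∀ v, height q₁ (v + 1) = height q₂ (v + 1) := fun v => by
    rcases lt_or_ge v n with hv | hv
    · exact hh v hv
    · rw [height_eq_zero_of_forall_lt fun p hp => (h₁.le_of_mem hp).trans_lt (by omega),
        height_eq_zero_of_forall_lt fun p hp => (h₂.le_of_mem hp).trans_lt (by omega)]
  refine List.Perm.eq_of_pairwise (fun a b _ _ hab hba => le_antisymm hba hab) h₁.1 h₂.1
    (List.perm_iff_count.2 fun v => ?_)
  cases v with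
  | zero =>
    rw [List.count_eq_zero_of_not_mem fun h => (h₁.2.1 0 h).false,
      List.count_eq_zero_of_not_mem fun h => (h₂.2.1 0 h).false]
  | succ v =>
    have := height_eq_count_add_height_succ q₁ (v + 1)
    have := height_eq_count_add_height_succ q₂ (v + 1)
    have := hheight v
    have := hheight (v + 1)
    omega

end IsPartition

lemma abs_yval_two_mul_add_one (r : ℝ) (k : ℕ) : |yval r (2 * k + 1)| = k + |r| := by
  have hpow : (-1 : ℝ) ^ (2 * k + 1 - 1) = 1 := by simp
  rw [yval, hpow, show (2 * k + 1) / 2 = k by omega, sgnR]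
  split_ifs with hr
  · rw [abs_of_nonneg hr, abs_of_nonneg (by positivity)]; ring
  · rw [abs_of_neg (not_le.1 hr), abs_of_nonpos (by linarith [k.cast_nonneg (α := ℝ)])]; ring

lemma abs_yval_two_mul_add_two {r : ℝ} (hr : |r| ≤ 1) (k : ℕ) :
    |yval r (2 * k + 2)| = k + 1 - |r| := by
  have hpow : (-1 : ℝ) ^ (2 * k + 2 - 1) = -1 := by
    rw [show 2 * k + 2 - 1 = 2 * k + 1 by omega, pow_succ, pow_mul]; simp
  rw [yval, hpow, show (2 * k + 2) / 2 = k + 1 by omega, sgnR]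
  have hk : (0 : ℝ) ≤ k := k.cast_nonneg
  push_cast
  split_ifs with h0
  · rw [abs_of_nonneg h0] at hr ⊢; rw [abs_of_nonpos (by linarith)]; ring
  · rw [abs_of_neg (not_le.1 h0)] at hr ⊢; rw [abs_of_nonneg (by linarith)]; ring

lemma abs_yval_succ_sub_abs_yval {r : ℝ} (hr : |r| ≤ 1) (i : ℕ) :
    |yval r (i + 2)| - |yval r (i + 1)| = if Even i then 1 - 2 * |r| else 2 * |r| := by
  obtain ⟨k, rfl | rfl⟩ := Nat.even_or_odd' i
  · rw [if_pos (even_two_mul k), abs_yval_two_mul_add_two hr, abs_yval_two_mul_add_one]; ring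
  · rw [if_neg (Nat.not_even_iff_odd.2 (odd_two_mul_add_one k)),
      show 2 * k + 1 + 2 = 2 * (k + 1) + 1 by ring, show 2 * k + 1 + 1 = 2 * k + 2 by ring,
      abs_yval_two_mul_add_one, abs_yval_two_mul_add_two hr]
    push_cast; ring

lemma monotone_sq_yval_succ {r : ℝ} (hr : |r| ≤ 1 / 2) :
    Monotone fun i => yval r (i + 1) ^ 2 := by
  refine monotone_nat_of_le_succ fun i => ?_
  have hstep := abs_yval_succ_sub_abs_yval (hr.trans (by norm_num)) i
  have hle : |yval r (i + 1)| ≤ |yval r (i + 2)| := by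
    split_ifs at hstep <;> linarith [abs_nonneg r]
  simpa only [sq_abs] using pow_le_pow_left₀ (abs_nonneg _) hle 2

lemma strictMono_sq_yval_succ {r : ℝ} (hr₀ : 0 < |r|) (hr : |r| < 1 / 2) :
    StrictMono fun i => yval r (i + 1) ^ 2 := by
  refine strictMono_nat_of_lt_succ fun i => ?_
  have hstep := abs_yval_succ_sub_abs_yval (hr.le.trans (by norm_num)) i
  have hlt : |yval r (i + 1)| < |yval r (i + 2)| := by
    split_ifs at hstep <;> linarith
  simpa only [sq_abs] using pow_lt_pow_left₀ hlt (abs_nonneg _) two_ne_zero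

/-- Lemma 3.9 (gl_compare): if `q₁ ⪯ q₂` are partitions of `n` and `r ∈ (−1/2, 1/2]`, then
`∑_j c_j(q₁) y_j(r)² ≤ ∑_j c_j(q₂) y_j(r)²`, i.e. `‖ξ_r(q₁)‖ ≤ ‖ξ_r(q₂)‖`; if moreover
`r ∉ {0, 1/2}`, equality holds iff `q₁ = q₂`. -/
theorem xi_norm_compare (n : ℕ) (q1 q2 : List ℕ)
    (h1 : IsPartition n q1) (h2 : IsPartition n q2) (hdom : Dom q1 q2)
    (r : ℝ) (hr1 : -(1 / 2 : ℝ) < r) (hr2 : r ≤ 1 / 2) :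
    (∑ j ∈ Finset.Icc 1 n, (height q1 j : ℝ) * (yval r j) ^ 2
        ≤ ∑ j ∈ Finset.Icc 1 n, (height q2 j : ℝ) * (yval r j) ^ 2) ∧
    (r ≠ 0 → r ≠ 1 / 2 →
      ((∑ j ∈ Finset.Icc 1 n, (height q1 j : ℝ) * (yval r j) ^ 2
          = ∑ j ∈ Finset.Icc 1 n, (height q2 j : ℝ) * (yval r j) ^ 2) ↔ q1 = q2)) := by
  have hreindex : ∀ q : List ℕ, ∑ j ∈ Icc 1 n, (height q j : ℝ) * yval r j ^ 2 =
      ∑ i ∈ range n, (height q (i + 1) : ℝ) * yval r (i + 1) ^ 2 := fun q => by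
    rw [range_eq_Ico, sum_Ico_add' (fun j => (height q j : ℝ) * yval r j ^ 2) 0 n 1]; rfl
  have hpartial : ∀ k < n, ∑ i ∈ range k, (height q2 (i + 1) : ℝ) ≤
      ∑ i ∈ range k, (height q1 (i + 1) : ℝ) := fun k _ => by
    simp only [← Nat.cast_sum, sum_range_height_succ, Nat.cast_le]
    exact truncatedSum_le_of_dom h1.1 (h1.2.2.trans h2.2.2.symm) hdom k
  have htotal : ∑ i ∈ range n, (height q1 (i + 1) : ℝ) =
      ∑ i ∈ range n, (height q2 (i + 1) : ℝ) := by
    simp only [← Nat.cast_sum, sum_range_height_succ, h1.truncatedSum_self, h2.truncatedSum_self]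
  simp only [hreindex]
  refine ⟨sum_mul_le_sum_mul_of_sum_range_le (monotone_sq_yval_succ (abs_le.2 ⟨hr1.le, hr2⟩))
    hpartial htotal, fun h0 h12 => ⟨fun heq => h1.eq_of_height_succ_eq h2 fun i hi => ?_,
      by rintro rfl; rfl⟩⟩
  have hmono := strictMono_sq_yval_succ (abs_pos.2 h0) (abs_lt.2 ⟨hr1, hr2.lt_of_ne h12⟩)
  exact_mod_cast eq_of_sum_mul_eq_of_strictMono hmono hpartial htotal heq i hi
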